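/- Let A = ℝ[X,Y]/(X³Y, X²Y², Y⁴, X³−Y³). Then every ℝ-algebra automorphism φ of A has linear part on 𝔫/𝔫² equal to the scalar matrix diag(A, A) for some real A ≠ 0; i.e., φ(X) ≡ AX and φ(Y) ≡ AY modulo 𝔫². -/

import Mathlib

/-- The Weil algebra `A = ℝ[X,Y]/(X³Y, X²Y², Y⁴, X³−Y³)`. -/
noncomputable abbrev WB : Type :=
  MvPolynomial (Fin 2) ℝ ⧸
    (Ideal.span {(MvPolynomial.X 0 : MvPolynomial (Fin 2) ℝ) ^ 3 * MvPolynomial.X 1,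
      (MvPolynomial.X 0) ^ 2 * (MvPolynomial.X 1) ^ 2, (MvPolynomial.X 1) ^ 4,
      (MvPolynomial.X 0) ^ 3 - (MvPolynomial.X 1) ^ 3} : Ideal (MvPolynomial (Fin 2) ℝ))

/-- The residue class of `X`. -/
noncomputable def bx : WB := Ideal.Quotient.mk _ (MvPolynomial.X 0)

/-- The residue class of `Y`. -/
noncomputable def bY : WB := Ideal.Quotient.mk _ (MvPolynomial.X 1)

/-- The maximal (nilpotent) ideal `𝔫 = (X, Y)` of `A`. -/
noncomputable def mIdeal : Ideal WB := Ideal.span {bx, bY}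

/-!
An automorphism `φ` preserves `𝔫`, the nilradical of `A`, so it induces a linear map on `𝔫/𝔫²`:
`φ(X) ≡ aX + bY`, `φ(Y) ≡ cX + dY`, with `ad - bc ≠ 0` because `φ⁻¹` induces the inverse map.
Applying `φ` to the relations `Y⁴ = 0` and `X³ = Y³` and keeping leading forms gives
`(cX + dY)⁴ ∈ 𝔫⁵` and `(aX + bY)³ - (cX + dY)³ ∈ 𝔫⁴`. In `A`, `(cX + dY)⁴ = (c⁴ + 4cd³)X⁴` with
`X⁴ ∉ 𝔫⁵`, and `X³, X²Y, XY²` are independent modulo `𝔫⁴`; hence `c⁴ + 4cd³ = 0`,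
`a³ + b³ = c³ + d³`, `a²b = c²d` and `ab² = cd²`. If `c ≠ 0`, then `d ≠ 0` and `ab = cd ≠ 0`,
while `ab(ad - bc) = d·a²b - c·ab² = 0`, a contradiction; so `c = 0`, hence `b = 0` and `a = d`.
-/

open MvPolynomial

namespace MvPolynomial

variable {σ R : Type*}

theorem idealOfVars_eq_ker_constantCoeff [CommSemiring R] :
    idealOfVars σ R = RingHom.ker (constantCoeff (σ := σ) (R := R)) := by
  ext p
  rw [← pow_one (idealOfVars σ R), mem_pow_idealOfVars_iff', RingHom.mem_ker]
  simp [Finsupp.degree_eq_zero_iff, constantCoeff_eq]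

instance isPrime_idealOfVars [CommSemiring R] [IsDomain R] : (idealOfVars σ R).IsPrime := by
  rw [idealOfVars_eq_ker_constantCoeff]
  exact RingHom.ker_isPrime _

theorem sub_sum_C_coeff_mul_X_mem_idealOfVars_sq [CommRing R] [Fintype σ]
    {p : MvPolynomial σ R} (hp : p ∈ idealOfVars σ R) :
    p - ∑ i, C (coeff (Finsupp.single i 1) p) * X i ∈ idealOfVars σ R ^ 2 := by
  classical
  rw [idealOfVars_eq_ker_constantCoeff, RingHom.mem_ker, constantCoeff_eq] at hp
  rw [mem_pow_idealOfVars_iff']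
  intro x hx
  rcases Nat.lt_succ_iff_lt_or_eq.mp hx with h0 | h1
  · rw [Nat.lt_one_iff, Finsupp.degree_eq_zero_iff] at h0
    simp [h0, hp, coeff_X, coeff_sum]
  · obtain ⟨i, rfl⟩ : x ∈ Set.range (Finsupp.single · 1) := by
      rwa [Finsupp.range_single_one]
    simp [coeff_X, coeff_sum, Finsupp.single_left_inj]

end MvPolynomial

theorem Ideal.add_pow_sub_pow_mem {R : Type*} [CommRing R] {I : Ideal R} {x y : R} (hx : x ∈ I)
    (hy : y ∈ I ^ 2) (n : ℕ) : (x + y) ^ n - x ^ n ∈ I ^ (n + 1) := by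
  induction n with
  | zero => simp
  | succ n ih =>
    have key : (x + y) ^ (n + 1) - x ^ (n + 1) = (x + y) * ((x + y) ^ n - x ^ n) + y * x ^ n := by
      ring
    rw [key]
    refine add_mem ?_ ?_
    · rw [pow_succ' I (n + 1)]
      exact Ideal.mul_mem_mul (add_mem hx (Ideal.pow_le_self two_ne_zero hy)) ih
    · rw [show n + 1 + 1 = 2 + n by ring, pow_add]
      exact Ideal.mul_mem_mul hy (Ideal.pow_mem_pow hx n)

theorem eq_scalar_of_cubic_quartic_relations {a b c d : ℝ} (hdet : a * d - b * c ≠ 0)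
    (h30 : a ^ 3 + b ^ 3 = c ^ 3 + d ^ 3) (h21 : a ^ 2 * b = c ^ 2 * d)
    (h12 : a * b ^ 2 = c * d ^ 2) (h4 : c ^ 4 + 4 * c * d ^ 3 = 0) :
    a ≠ 0 ∧ b = 0 ∧ c = 0 ∧ d = a := by
  have hc : c = 0 := by
    by_contra hc
    have hd : d ≠ 0 := by
      rintro rfl
      exact hc (pow_eq_zero_iff four_ne_zero |>.mp (by simpa using h4))
    have hab : a * b = c * d := by
      refine (Odd.pow_inj (n := 3) (by decide)).mp ?_
      linear_combination (a * b ^ 2) * h21 + (c ^ 2 * d) * h12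
    have : a * b * (a * d - b * c) = 0 := by linear_combination d * h21 - c * h12
    exact mul_ne_zero (hab ▸ mul_ne_zero hc hd) hdet this
  subst hc
  have ha : a ≠ 0 := by
    rintro rfl
    simp at hdet
  have hb : b = 0 := by simpa [ha] using h21
  subst hb
  exact ⟨ha, rfl, rfl, ((Odd.pow_inj (n := 3) (by decide)).mp (by simpa using h30)).symm⟩

namespace WB

noncomputable abbrev relIdeal : Ideal (MvPolynomial (Fin 2) ℝ) :=
  Ideal.span {X 0 ^ 3 * X 1, X 0 ^ 2 * X 1 ^ 2, X 1 ^ 4, X 0 ^ 3 - X 1 ^ 3}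

local notation "𝔪" => idealOfVars (Fin 2) ℝ
local notation "π" => Ideal.Quotient.mk relIdeal

theorem bx_pow_three_mul_bY : bx ^ 3 * bY = 0 :=
  Ideal.Quotient.eq_zero_iff_mem.mpr (Ideal.subset_span (by simp))

theorem bx_sq_mul_bY_sq : bx ^ 2 * bY ^ 2 = 0 :=
  Ideal.Quotient.eq_zero_iff_mem.mpr (Ideal.subset_span (by simp))

theorem bY_pow_four : bY ^ 4 = 0 :=
  Ideal.Quotient.eq_zero_iff_mem.mpr (Ideal.subset_span (by simp))

theorem bY_pow_three : bY ^ 3 = bx ^ 3 :=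
  (sub_eq_zero.mp (Ideal.Quotient.eq_zero_iff_mem.mpr (Ideal.subset_span (by simp)))).symm

theorem bx_pow_five : bx ^ 5 = 0 := by
  linear_combination bx ^ 2 * bY_pow_three.symm + bY * bx_sq_mul_bY_sq

-- `Algebra.smul_def` does not rewrite syntactically here: `ℝ` acts on `WB` through the quotient.
theorem smul_eq_algebraMap_mul (a : ℝ) (z : WB) : a • z = algebraMap ℝ WB a * z :=
  Algebra.smul_def a z

theorem smul_add_smul_pow_three (a b : ℝ) :
    (a • bx + b • bY) ^ 3 = (a ^ 3 + b ^ 3) • bx ^ 3 + (3 * a ^ 2 * b) • (bx ^ 2 * bY)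
      + (3 * a * b ^ 2) • (bx * bY ^ 2) := by
  simp only [smul_eq_algebraMap_mul, map_add, map_mul, map_pow, map_ofNat]
  linear_combination algebraMap ℝ WB b ^ 3 * bY_pow_three

theorem smul_add_smul_pow_four (c d : ℝ) :
    (c • bx + d • bY) ^ 4 = (c ^ 4 + 4 * c * d ^ 3) • bx ^ 4 := by
  simp only [smul_eq_algebraMap_mul, map_add, map_mul, map_pow, map_ofNat]
  set c' := algebraMap ℝ WB c
  set d' := algebraMap ℝ WB d
  linear_combination (4 * c' ^ 3 * d') * bx_pow_three_mul_bY
    + (6 * c' ^ 2 * d' ^ 2) * bx_sq_mul_bY_sq + d' ^ 4 * bY_pow_four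
    + (4 * c' * d' ^ 3 * bx) * bY_pow_three

theorem relIdeal_le_pow_three : relIdeal ≤ 𝔪 ^ 3 := by
  have hX (i : Fin 2) : (X i : MvPolynomial (Fin 2) ℝ) ∈ 𝔪 := Ideal.subset_span ⟨i, rfl⟩
  have hX2 (i j : Fin 2) : (X i ^ 2 * X j : MvPolynomial (Fin 2) ℝ) ∈ 𝔪 ^ 3 := by
    rw [pow_succ]
    exact Ideal.mul_mem_mul (Ideal.pow_mem_pow (hX i) 2) (hX j)
  simp only [Ideal.span_le, Set.insert_subset_iff, Set.singleton_subset_iff, SetLike.mem_coe]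
  refine ⟨?_, ?_, ?_, sub_mem (Ideal.pow_mem_pow (hX 0) 3) (Ideal.pow_mem_pow (hX 1) 3)⟩
  · simpa [pow_succ] using Ideal.mul_mem_right (X 1) _ (hX2 0 0)
  · simpa [pow_succ, mul_assoc] using Ideal.mul_mem_right (X 1) _ (hX2 0 1)
  · simpa [pow_succ] using Ideal.mul_mem_right (X 1) _ (hX2 1 1)

theorem mIdeal_eq_map : mIdeal = Ideal.map π 𝔪 := by
  rw [mIdeal, Ideal.map_span, ← Set.range_comp]
  congr 1
  ext z
  simp [Fin.exists_fin_two, bx, bY, eq_comm]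

theorem mk_mem_mIdeal_pow_iff {p : MvPolynomial (Fin 2) ℝ} (k : ℕ) :
    π p ∈ mIdeal ^ k ↔ p ∈ 𝔪 ^ k ⊔ relIdeal := by
  rw [mIdeal_eq_map, ← Ideal.map_pow, ← Ideal.mem_comap,
    Ideal.comap_map_of_surjective' _ Ideal.Quotient.mk_surjective, Ideal.mk_ker]

theorem mk_mem_mIdeal_pow_iff_of_le {p : MvPolynomial (Fin 2) ℝ} {k : ℕ} (hk : k ≤ 3) :
    π p ∈ mIdeal ^ k ↔ p ∈ 𝔪 ^ k := by
  rw [mk_mem_mIdeal_pow_iff,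
    sup_eq_left.mpr (relIdeal_le_pow_three.trans (Ideal.pow_le_pow_right hk))]

theorem mIdeal_eq_nilradical : mIdeal = nilradical WB := by
  apply le_antisymm
  · rw [mIdeal, Ideal.span_le, Set.insert_subset_iff, Set.singleton_subset_iff]
    exact ⟨⟨5, bx_pow_five⟩, ⟨4, bY_pow_four⟩⟩
  · intro z hz
    obtain ⟨n, hn⟩ := mem_nilradical.mp hz
    obtain ⟨p, rfl⟩ := Ideal.Quotient.mk_surjective z
    have hpn : p ^ n ∈ relIdeal := Ideal.Quotient.eq_zero_iff_mem.mp (by rw [map_pow, hn])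
    rw [mIdeal_eq_map]
    refine Ideal.mem_map_of_mem _ (Ideal.IsPrime.mem_of_pow_mem inferInstance n ?_)
    exact Ideal.pow_le_self three_ne_zero (relIdeal_le_pow_three hpn)

theorem map_mIdeal_le {F : Type*} [FunLike F WB WB] [RingHomClass F WB WB] (f : F) :
    mIdeal.map f ≤ mIdeal := by
  rw [Ideal.map_le_iff_le_comap, mIdeal_eq_nilradical]
  exact fun z hz => mem_nilradical.mpr ((mem_nilradical.mp hz).map f)

theorem apply_mem_mIdeal_pow {F : Type*} [FunLike F WB WB] [RingHomClass F WB WB] (f : F)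
    {z : WB} {k : ℕ} (hz : z ∈ mIdeal ^ k) : f z ∈ mIdeal ^ k :=
  Ideal.pow_right_mono (map_mIdeal_le f) k (Ideal.map_pow f mIdeal k ▸ Ideal.mem_map_of_mem f hz)

noncomputable abbrev expXY (i j : ℕ) : Fin 2 →₀ ℕ := Finsupp.single 0 i + Finsupp.single 1 j

theorem exists_eq_of_mem_relIdeal {p : MvPolynomial (Fin 2) ℝ} (hp : p ∈ relIdeal) :
    ∃ q₁ q₂ q₃ q₄, p = q₁ * (X 0 ^ 3 * X 1) + q₂ * (X 0 ^ 2 * X 1 ^ 2) + q₃ * X 1 ^ 4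
      + q₄ * (X 0 ^ 3 - X 1 ^ 3) := by
  obtain ⟨q₁, p₁, hp₁, rfl⟩ := Ideal.mem_span_insert.mp hp
  obtain ⟨q₂, p₂, hp₂, rfl⟩ := Ideal.mem_span_insert.mp hp₁
  obtain ⟨q₃, p₃, hp₃, rfl⟩ := Ideal.mem_span_insert.mp hp₂
  obtain ⟨q₄, rfl⟩ := Ideal.mem_span_singleton'.mp hp₃
  exact ⟨q₁, q₂, q₃, q₄, by ring⟩

/-- These are the coordinates of `X²Y`, `XY²`, `X³ = Y³` and `X⁴ = XY³` in the monomial basis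
of `A`. -/
theorem coeff_eq_zero_of_mem_relIdeal {p : MvPolynomial (Fin 2) ℝ} (hp : p ∈ relIdeal) :
    coeff (expXY 2 1) p = 0 ∧ coeff (expXY 1 2) p = 0 ∧
      coeff (expXY 3 0) p + coeff (expXY 0 3) p = 0 ∧
      coeff (expXY 4 0) p + coeff (expXY 1 3) p = 0 := by
  obtain ⟨q₁, q₂, q₃, q₄, rfl⟩ := exists_eq_of_mem_relIdeal hp
  simp only [X, monomial_pow, monomial_mul, mul_sub, coeff_add, coeff_sub, coeff_mul_monomial']
  refine ⟨?_, ?_, ?_, ?_⟩ <;>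
    simp [expXY, Finsupp.le_def, Fin.forall_fin_two, ← Finsupp.single_tsub]

theorem exists_mem_relIdeal_coeff_eq_of_mk_mem {p : MvPolynomial (Fin 2) ℝ} {k : ℕ}
    (h : π p ∈ mIdeal ^ k) :
    ∃ r ∈ relIdeal, ∀ x, Finsupp.degree x < k → coeff x p = coeff x r := by
  obtain ⟨m, hm, r, hr, rfl⟩ := Submodule.mem_sup.mp ((mk_mem_mIdeal_pow_iff k).mp h)
  refine ⟨r, hr, fun x hx => ?_⟩
  rw [coeff_add, (mem_pow_idealOfVars_iff' k m).mp hm x hx, zero_add]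

theorem eq_zero_of_cubic_mem_pow_four {α β γ : ℝ}
    (h : α • bx ^ 3 + β • (bx ^ 2 * bY) + γ • (bx * bY ^ 2) ∈ mIdeal ^ 4) :
    α = 0 ∧ β = 0 ∧ γ = 0 := by
  set p : MvPolynomial (Fin 2) ℝ := C α * X 0 ^ 3 + C β * (X 0 ^ 2 * X 1) + C γ * (X 0 * X 1 ^ 2)
  have hp : π p = α • bx ^ 3 + β • (bx ^ 2 * bY) + γ • (bx * bY ^ 2) := by
    simp [p, bx, bY, smul_eq_algebraMap_mul, ← Ideal.Quotient.mk_algebraMap, algebraMap_eq]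
  obtain ⟨r, hr, hpr⟩ := exists_mem_relIdeal_coeff_eq_of_mk_mem (hp ▸ h)
  obtain ⟨h21, h12, h3, -⟩ := coeff_eq_zero_of_mem_relIdeal hr
  rw [← hpr _ (by simp)] at h21 h12
  rw [← hpr _ (by simp), ← hpr _ (by simp)] at h3
  simp [p, X, monomial_pow, monomial_mul, C_mul_monomial, coeff_monomial, Finsupp.ext_iff,
    Fin.forall_fin_two] at h21 h12 h3
  exact ⟨h3, h21, h12⟩

theorem eq_zero_of_smul_bx_pow_four_mem_pow_five {α : ℝ} (h : α • bx ^ 4 ∈ mIdeal ^ 5) :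
    α = 0 := by
  have hp : π (C α * X 0 ^ 4) = α • bx ^ 4 := by
    simp [bx, smul_eq_algebraMap_mul, ← Ideal.Quotient.mk_algebraMap, algebraMap_eq]
  obtain ⟨r, hr, hpr⟩ := exists_mem_relIdeal_coeff_eq_of_mk_mem (hp ▸ h)
  obtain ⟨-, -, -, h4⟩ := coeff_eq_zero_of_mem_relIdeal hr
  rw [← hpr _ (by simp), ← hpr _ (by simp)] at h4
  simpa [X, monomial_pow, C_mul_monomial, coeff_monomial, Finsupp.ext_iff, Fin.forall_fin_two]
    using h4

noncomputable def gen (i : Fin 2) : WB := π (X i)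

@[simp] theorem gen_zero : gen 0 = bx := rfl

@[simp] theorem gen_one : gen 1 = bY := rfl

theorem gen_mem_mIdeal (i : Fin 2) : gen i ∈ mIdeal := by
  rw [mIdeal_eq_map]
  exact Ideal.mem_map_of_mem _ (Ideal.subset_span ⟨i, rfl⟩)

theorem sum_smul_gen (u : Fin 2 → ℝ) : ∑ j, u j • gen j = π (∑ j, C (u j) * X j) := by
  simp [gen, smul_eq_algebraMap_mul, ← Ideal.Quotient.mk_algebraMap, algebraMap_eq]

theorem eq_zero_of_sum_smul_gen_mem_sq {u : Fin 2 → ℝ} (h : ∑ j, u j • gen j ∈ mIdeal ^ 2) :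
    u = 0 := by
  rw [sum_smul_gen, mk_mem_mIdeal_pow_iff_of_le (by norm_num), mem_pow_idealOfVars_iff'] at h
  ext i
  have hi := h (Finsupp.single i 1) (by simp)
  fin_cases i <;> simpa [coeff_sum, coeff_X, Finsupp.single_left_inj] using hi

/-- `M` is the matrix, in rows, of the map induced by `f` on `𝔫/𝔫²`:
`f(X) ≡ M₀₀ X + M₀₁ Y` and `f(Y) ≡ M₁₀ X + M₁₁ Y`. -/
def IsLinearPart (f : WB →ₐ[ℝ] WB) (M : Matrix (Fin 2) (Fin 2) ℝ) : Prop :=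
  ∀ i, f (gen i) - ∑ j, M i j • gen j ∈ mIdeal ^ 2

theorem exists_isLinearPart (f : WB →ₐ[ℝ] WB) : ∃ M, IsLinearPart f M := by
  have hlift (i : Fin 2) : ∃ p ∈ 𝔪, π p = f (gen i) := by
    have hfi : f (gen i) ∈ Ideal.map π 𝔪 :=
      mIdeal_eq_map ▸ map_mIdeal_le f (Ideal.mem_map_of_mem f (gen_mem_mIdeal i))
    exact (Ideal.mem_map_iff_of_surjective _ Ideal.Quotient.mk_surjective).mp hfi
  choose p hp hpf using hlift
  refine ⟨fun i j => coeff (Finsupp.single j 1) (p i), fun i => ?_⟩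
  rw [← hpf, sum_smul_gen, ← map_sub, mk_mem_mIdeal_pow_iff_of_le (by norm_num)]
  exact sub_sum_C_coeff_mul_X_mem_idealOfVars_sq (hp i)

theorem isLinearPart_id : IsLinearPart (AlgHom.id ℝ WB) 1 := by
  intro i
  simp [Matrix.one_apply]

theorem IsLinearPart.unique {f : WB →ₐ[ℝ] WB} {M N : Matrix (Fin 2) (Fin 2) ℝ}
    (hM : IsLinearPart f M) (hN : IsLinearPart f N) : M = N := by
  ext i j
  have h := eq_zero_of_sum_smul_gen_mem_sq (u := M i - N i) (by
    simpa [sub_smul, Finset.sum_sub_distrib] using sub_mem (hN i) (hM i))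
  simpa [sub_eq_zero] using congrFun h j

theorem IsLinearPart.comp {f g : WB →ₐ[ℝ] WB} {M N : Matrix (Fin 2) (Fin 2) ℝ}
    (hf : IsLinearPart f M) (hg : IsLinearPart g N) : IsLinearPart (f.comp g) (N * M) := by
  intro i
  have key : f (g (gen i)) - ∑ k, (N * M) i k • gen k =
      f (g (gen i) - ∑ j, N i j • gen j) + ∑ j, N i j • (f (gen j) - ∑ k, M j k • gen k) := by
    simp only [map_sub, map_sum, map_smul, smul_sub, Finset.smul_sum, smul_smul, Matrix.mul_apply,
      Finset.sum_smul, Finset.sum_sub_distrib]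
    rw [Finset.sum_comm]
    abel
  rw [AlgHom.comp_apply, key]
  exact add_mem (apply_mem_mIdeal_pow f (hg i))
    (sum_mem fun j _ => Submodule.smul_of_tower_mem _ _ (hf j))

theorem IsLinearPart.det_ne_zero {φ : WB ≃ₐ[ℝ] WB} {M : Matrix (Fin 2) (Fin 2) ℝ}
    (hM : IsLinearPart φ M) : M.det ≠ 0 := by
  obtain ⟨N, hN⟩ := exists_isLinearPart φ.symm
  have hNM : N * M = 1 := (AlgEquiv.comp_symm φ ▸ hM.comp hN).unique isLinearPart_id
  intro h
  simpa [h] using congrArg Matrix.det hNM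

theorem IsLinearPart.pow_sub_mem {f : WB →ₐ[ℝ] WB} {M : Matrix (Fin 2) (Fin 2) ℝ}
    (h : IsLinearPart f M) (i : Fin 2) (n : ℕ) :
    f (gen i) ^ n - (∑ j, M i j • gen j) ^ n ∈ mIdeal ^ (n + 1) := by
  have hL : ∑ j, M i j • gen j ∈ mIdeal :=
    sum_mem fun j _ => Submodule.smul_of_tower_mem _ _ (gen_mem_mIdeal j)
  simpa using Ideal.add_pow_sub_pow_mem hL (h i) n

theorem IsLinearPart.quartic_relation {f : WB →ₐ[ℝ] WB} {M : Matrix (Fin 2) (Fin 2) ℝ}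
    (h : IsLinearPart f M) : M 1 0 ^ 4 + 4 * M 1 0 * M 1 1 ^ 3 = 0 := by
  have h4 := h.pow_sub_mem 1 4
  rw [← map_pow, gen_one, bY_pow_four, map_zero, zero_sub, neg_mem_iff, Fin.sum_univ_two, gen_zero,
    gen_one, smul_add_smul_pow_four] at h4
  exact eq_zero_of_smul_bx_pow_four_mem_pow_five h4

theorem IsLinearPart.cubic_relations {f : WB →ₐ[ℝ] WB} {M : Matrix (Fin 2) (Fin 2) ℝ}
    (h : IsLinearPart f M) :
    M 0 0 ^ 3 + M 0 1 ^ 3 = M 1 0 ^ 3 + M 1 1 ^ 3 ∧ M 0 0 ^ 2 * M 0 1 = M 1 0 ^ 2 * M 1 1 ∧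
      M 0 0 * M 0 1 ^ 2 = M 1 0 * M 1 1 ^ 2 := by
  have hcube : f bY ^ 3 = f bx ^ 3 := by rw [← map_pow, ← map_pow, bY_pow_three]
  have h3 := sub_mem (h.pow_sub_mem 1 3) (h.pow_sub_mem 0 3)
  simp only [gen_zero, gen_one, hcube, sub_sub_sub_cancel_left, Fin.sum_univ_two,
    smul_add_smul_pow_three] at h3
  set a := M 0 0
  set b := M 0 1
  set c := M 1 0
  set d := M 1 1
  obtain ⟨h30, h21, h12⟩ := eq_zero_of_cubic_mem_pow_four
    (α := a ^ 3 + b ^ 3 - (c ^ 3 + d ^ 3)) (β := 3 * a ^ 2 * b - 3 * c ^ 2 * d)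
    (γ := 3 * a * b ^ 2 - 3 * c * d ^ 2) (by convert h3 using 1; module)
  exact ⟨by linarith, by linarith, by linarith⟩

end WB

/-- Every ℝ-algebra automorphism `φ` of `A = ℝ[X,Y]/(X³Y, X²Y², Y⁴, X³−Y³)` has linear
part on `𝔫/𝔫²` equal to the scalar matrix `diag(A, A)` for some real `A ≠ 0`; i.e.,
`φ(X) ≡ AX` and `φ(Y) ≡ AY` modulo `𝔫²`. -/
theorem stmt12 (φ : WB ≃ₐ[ℝ] WB) :
    ∃ a : ℝ, a ≠ 0 ∧ φ bx - a • bx ∈ mIdeal ^ 2 ∧ φ bY - a • bY ∈ mIdeal ^ 2 := by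
  obtain ⟨M, hM⟩ := WB.exists_isLinearPart φ
  obtain ⟨h30, h21, h12⟩ := hM.cubic_relations
  have hdet : M 0 0 * M 1 1 - M 0 1 * M 1 0 ≠ 0 := by
    simpa [Matrix.det_fin_two] using hM.det_ne_zero
  obtain ⟨ha, hb, hc, hd⟩ := eq_scalar_of_cubic_quartic_relations hdet h30 h21 h12 hM.quartic_relation
  refine ⟨M 0 0, ha, ?_, ?_⟩
  · simpa [hb] using hM 0
  · simpa [hc, hd] using hM 1
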